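/- arXiv:1708.02653 — 3 statements merged into one kernel-verified Lean document; each statement's English description precedes it below -/
import Mathlib

section
/- For every real number u, Ψ(u) = Ψ(−u); that is, Ψ is an even function. -/
open scoped Real

/-- ψ(x) = ∑_{n=1}^∞ exp(−n²πx). -/
noncomputable def psi (x : ℝ) : ℝ := ∑' n : ℕ+, Real.exp (-(n : ℝ) ^ 2 * π * x)

/-- Ψ(u) = ψ(e^u)·e^{u/4} − (1/2)·e^{−u/4}. -/
noncomputable def bigPsi (u : ℝ) : ℝ :=
  psi (Real.exp u) * Real.exp (u / 4) - (1 / 2) * Real.exp (-u / 4)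

lemma summable_aux {x : ℝ} (hx : 0 < x) :
    Summable (fun n : ℕ ↦ Real.exp (-π * x * (n : ℝ) ^ 2)) := by
  have hr : (0:ℝ) ≤ Real.exp (-(π * x)) := (Real.exp_pos _).le
  have hr1 : Real.exp (-(π * x)) < 1 := by
    rw [Real.exp_lt_one_iff]
    exact neg_neg_of_pos (mul_pos Real.pi_pos hx)
  refine Summable.of_nonneg_of_le (fun n ↦ (Real.exp_pos _).le) (fun n ↦ ?_)
    (summable_geometric_of_lt_one hr hr1)
  rw [← Real.exp_nat_mul]
  apply Real.exp_le_exp.mpr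
  have : (n : ℝ) ≤ (n : ℝ) ^ 2 := by
    exact_mod_cast Nat.le_self_pow two_ne_zero n
  nlinarith [mul_pos Real.pi_pos hx]

lemma psi_eq_nat (x : ℝ) :
    psi x = ∑' n : ℕ, Real.exp (-π * x * ((n : ℝ) + 1) ^ 2) := by
  rw [psi]
  rw [← Equiv.tsum_eq (Equiv.pnatEquivNat.symm)
    (fun p : ℕ+ ↦ Real.exp (-(p : ℝ) ^ 2 * π * x))]
  congr 1
  ext n
  have : ((Equiv.pnatEquivNat.symm n : ℕ+) : ℝ) = (n : ℝ) + 1 := by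
    simp [Equiv.pnatEquivNat, Nat.succPNat]
  rw [this]
  ring_nf

lemma tsum_int_eq (x : ℝ) (hx : 0 < x) :
    ∑' n : ℤ, Real.exp (-π * x * (n : ℝ) ^ 2) = 1 + 2 * psi x := by
  set f : ℤ → ℝ := fun n ↦ Real.exp (-π * x * (n : ℝ) ^ 2) with hf
  have hnat : Summable (fun n : ℕ ↦ f n) := by
    simpa [hf] using summable_aux hx
  have hneg : (fun n : ℕ ↦ f (-(n + 1))) = fun n : ℕ ↦ f (n + 1) := by
    ext n; simp only [hf]; push_cast; ring_nf
  have hnat' : Summable (fun n : ℕ ↦ f (n + 1)) :=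
    (summable_nat_add_iff 1).mpr hnat |>.congr (by intro n; push_cast; ring_nf)
  have hneg' : Summable (fun n : ℕ ↦ f (-(n + 1))) := by rw [hneg]; exact hnat'
  rw [tsum_of_nat_of_neg_add_one hnat hneg', hneg]
  have h0 : ∑' n : ℕ, f n = f 0 + ∑' n : ℕ, f (n + 1) := by
    rw [Summable.tsum_eq_zero_add hnat]; norm_cast
  rw [h0]
  have hf0 : f 0 = 1 := by simp [hf]
  rw [hf0, psi_eq_nat]
  have : ∑' n : ℕ, f (n + 1) = ∑' n : ℕ, Real.exp (-π * x * ((n : ℝ) + 1) ^ 2) := by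
    congr 1; ext n; simp only [hf]; push_cast; ring_nf
  rw [this]; ring

lemma psi_funct_eq (x : ℝ) (hx : 0 < x) :
    1 + 2 * psi x = x ^ (-(1/2) : ℝ) * (1 + 2 * psi x⁻¹) := by
  have key := Real.tsum_exp_neg_mul_int_sq hx
  rw [tsum_int_eq x hx] at key
  have : ∑' n : ℤ, Real.exp (-π / x * (n : ℝ) ^ 2)
      = ∑' n : ℤ, Real.exp (-π * x⁻¹ * (n : ℝ) ^ 2) := by
    congr 1
  rw [this, tsum_int_eq x⁻¹ (inv_pos.mpr hx)] at key
  rw [key, Real.rpow_neg hx.le, one_div]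

theorem bigPsi_even (u : ℝ) : bigPsi u = bigPsi (-u) := by
  have hx : (0:ℝ) < Real.exp u := Real.exp_pos u
  have key := psi_funct_eq (Real.exp u) hx
  have hinv : (Real.exp u)⁻¹ = Real.exp (-u) := by rw [← Real.exp_neg]
  rw [hinv] at key
  have hpow : (Real.exp u) ^ (-(1/2) : ℝ) = Real.exp (-(u/2)) := by
    rw [← Real.exp_log hx, ← Real.exp_mul, Real.log_exp] ; ring_nf
  rw [hpow] at key
  -- key : 1 + 2 * psi (exp u) = exp (-(u/2)) * (1 + 2 * psi (exp (-u)))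
  unfold bigPsi
  have e1 : Real.exp (-(u/2)) * Real.exp (u/4) = Real.exp (-u/4) := by
    rw [← Real.exp_add]; ring_nf
  have h5 : (1 + 2 * psi (Real.exp u)) * Real.exp (u/4)
      = (1 + 2 * psi (Real.exp (-u))) * Real.exp (-u/4) := by
    calc (1 + 2 * psi (Real.exp u)) * Real.exp (u/4)
        = Real.exp (-(u/2)) * (1 + 2 * psi (Real.exp (-u))) * Real.exp (u/4) := by rw [key]
      _ = (1 + 2 * psi (Real.exp (-u))) * (Real.exp (-(u/2)) * Real.exp (u/4)) := by ring
      _ = (1 + 2 * psi (Real.exp (-u))) * Real.exp (-u/4) := by rw [e1]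
  simp only [neg_neg]
  linear_combination h5 / 2
end

section
/- For every real number u, Ψ(u) = e^{−u/4} · ∑_{n=1}^∞ ∫_{n−1}^{n} ( exp(−π n² e^{−u}) − exp(−π v² e^{−u}) ) dv, where the series converges absolutely. -/
set_option maxHeartbeats 1000000


open scoped Real
open MeasureTheory

lemma pnat_cast_succPNat (n : ℕ) : ((n.succPNat : ℕ+) : ℝ) = n + 1 := by
  have : ((n.succPNat : ℕ+) : ℕ) = n + 1 := rfl
  exact_mod_cast congrArg (Nat.cast : ℕ → ℝ) this

lemma summable_gauss {c : ℝ} (hc : 0 < c) :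
    Summable (fun n : ℕ ↦ Real.exp (-c * (n : ℝ) ^ 2)) := by
  refine Summable.of_nonneg_of_le (fun n ↦ (Real.exp_nonneg _)) (fun n ↦ ?_)
    (Real.summable_exp_nat_mul_iff.mpr (neg_lt_zero.mpr hc))
  apply Real.exp_le_exp.mpr
  have h1 : (n : ℝ) ≤ (n : ℝ) ^ 2 := by
    have := Nat.le_self_pow (two_ne_zero) n
    exact_mod_cast this
  nlinarith

/-- ℕ+ sum version of the gaussian summability, matching psi's exponent shape. -/
lemma summable_psi_term {x : ℝ} (hx : 0 < x) :
    Summable (fun n : ℕ+ ↦ Real.exp (-(n : ℝ) ^ 2 * π * x)) := by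
  rw [← Equiv.pnatEquivNat.symm.summable_iff]
  have h := (summable_nat_add_iff 1).mpr (summable_gauss (mul_pos Real.pi_pos hx))
  refine h.congr fun n ↦ ?_
  simp only [Function.comp, Equiv.pnatEquivNat_symm_apply, pnat_cast_succPNat]
  congr 1
  push_cast
  ring

lemma tsum_int_gauss {x : ℝ} (hx : 0 < x) :
    (∑' n : ℤ, Real.exp (-π * x * (n : ℝ) ^ 2)) = 1 + 2 * psi x := by
  have hg := summable_gauss (mul_pos Real.pi_pos hx)
  have hsum : Summable (fun n : ℕ ↦ Real.exp (-π * x * ((n : ℝ) + 1) ^ 2)) := by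
    refine ((summable_nat_add_iff 1).mpr hg).congr fun n ↦ ?_
    congr 1; push_cast; ring
  have h1 : Summable (fun n : ℕ ↦ Real.exp (-π * x * (((n : ℤ) + 1 : ℤ) : ℝ) ^ 2)) :=
    hsum.congr fun n ↦ by congr 1; push_cast; ring
  have h2 : Summable (fun n : ℕ ↦ Real.exp (-π * x * ((-((n : ℤ) + 1) : ℤ) : ℝ) ^ 2)) :=
    hsum.congr fun n ↦ by congr 1; push_cast; ring
  have key := tsum_of_add_one_of_neg_add_one
    (f := fun n : ℤ ↦ Real.exp (-π * x * (n : ℝ) ^ 2)) h1 h2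
  rw [key]
  have hpsi : psi x = ∑' n : ℕ, Real.exp (-π * x * ((n : ℝ) + 1) ^ 2) := by
    rw [psi, ← Equiv.pnatEquivNat.symm.tsum_eq]
    refine tsum_congr fun n ↦ ?_
    simp only [Equiv.pnatEquivNat_symm_apply, pnat_cast_succPNat]
    congr 1; ring
  have e1 : (∑' n : ℕ, Real.exp (-π * x * (((n : ℤ) + 1 : ℤ) : ℝ) ^ 2)) = psi x := by
    rw [hpsi]; exact tsum_congr fun n ↦ by congr 1; push_cast; ring
  have e2 : (∑' n : ℕ, Real.exp (-π * x * ((-((n : ℤ) + 1) : ℤ) : ℝ) ^ 2)) = psi x := by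
    rw [hpsi]; exact tsum_congr fun n ↦ by congr 1; push_cast; ring
  have e0 : Real.exp (-π * x * ((0 : ℤ) : ℝ) ^ 2) = 1 := by norm_num
  rw [e1, e2]
  rw [e0]
  ring

theorem bigPsi_eq_tsum_integral (u : ℝ) :
    Summable (fun n : ℕ+ =>
      |∫ v in ((n : ℝ) - 1)..(n : ℝ),
        (Real.exp (-(π * (n : ℝ) ^ 2 * Real.exp (-u))) -
          Real.exp (-(π * v ^ 2 * Real.exp (-u))))|) ∧
    bigPsi u = Real.exp (-u / 4) *
      ∑' n : ℕ+, ∫ v in ((n : ℝ) - 1)..(n : ℝ),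
        (Real.exp (-(π * (n : ℝ) ^ 2 * Real.exp (-u))) -
          Real.exp (-(π * v ^ 2 * Real.exp (-u)))) := by
  set t := Real.exp (-u) with ht_def
  have ht : 0 < t := Real.exp_pos _
  set c := π * t with hc_def
  have hc : 0 < c := mul_pos Real.pi_pos ht
  set f : ℝ → ℝ := fun v ↦ Real.exp (-(π * v ^ 2 * t)) with hf_def
  have hf_eq : ∀ v, f v = Real.exp (-c * v ^ 2) := fun v ↦ by
    simp only [hf_def, hc_def]; congr 1; ring
  have hfc : Continuous f := by
    apply Real.continuous_exp.comp
    continuity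
  have hf_nonneg : ∀ v, 0 ≤ f v := fun v ↦ Real.exp_nonneg _
  -- monotone bound on f over [a, ∞) for 0 ≤ a
  have hf_le : ∀ a v : ℝ, 0 ≤ a → a ≤ v → f v ≤ Real.exp (-c * a ^ 2) := by
    intro a v ha hav
    rw [hf_eq]
    apply Real.exp_le_exp.mpr
    have h2 : a ^ 2 ≤ v ^ 2 := pow_le_pow_left₀ ha hav 2
    nlinarith [h2, hc]
  -- the interval integral splits
  have hInt : ∀ n : ℕ+,
      (∫ v in ((n : ℝ) - 1)..(n : ℝ), (Real.exp (-(π * (n : ℝ) ^ 2 * t)) - f v)) =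
        Real.exp (-(π * (n : ℝ) ^ 2 * t)) - ∫ v in ((n : ℝ) - 1)..(n : ℝ), f v := by
    intro n
    rw [intervalIntegral.integral_sub intervalIntegrable_const
      (hfc.intervalIntegrable _ _), intervalIntegral.integral_const]
    simp
  have hn1 : ∀ n : ℕ+, (0 : ℝ) ≤ (n : ℝ) - 1 := by
    intro n
    have : (1 : ℝ) ≤ (n : ℝ) := by exact_mod_cast n.one_le
    linarith
  -- bound on |interval integral of f|
  have hIf_le : ∀ n : ℕ+,
      |∫ v in ((n : ℝ) - 1)..(n : ℝ), f v| ≤ Real.exp (-c * ((n : ℝ) - 1) ^ 2) := by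
    intro n
    have key := intervalIntegral.norm_integral_le_of_norm_le_const
      (f := f) (a := (n : ℝ) - 1) (b := (n : ℝ)) (C := Real.exp (-c * ((n : ℝ) - 1) ^ 2))
      (fun x hx ↦ ?_)
    · simpa using key
    · rw [Set.uIoc_of_le (by linarith)] at hx
      rw [Real.norm_eq_abs, abs_of_nonneg (hf_nonneg x)]
      exact hf_le _ _ (hn1 n) hx.1.le
  -- summability of the bounding sequence over ℕ+
  have hBsumm : Summable (fun n : ℕ+ ↦
      Real.exp (-c * (n : ℝ) ^ 2) + Real.exp (-c * ((n : ℝ) - 1) ^ 2)) := by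
    rw [← Equiv.pnatEquivNat.symm.summable_iff]
    have hg := summable_gauss hc
    have h1 := (summable_nat_add_iff 1).mpr hg
    refine (h1.add hg).congr fun n ↦ ?_
    simp only [Function.comp, Equiv.pnatEquivNat_symm_apply, pnat_cast_succPNat]
    push_cast
    ring_nf
  -- first conjunct
  have hsumm : Summable (fun n : ℕ+ ↦
      |∫ v in ((n : ℝ) - 1)..(n : ℝ),
        (Real.exp (-(π * (n : ℝ) ^ 2 * t)) - f v)|) := by
    refine Summable.of_nonneg_of_le (fun n ↦ abs_nonneg _) (fun n ↦ ?_) hBsumm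
    rw [hInt n]
    calc |Real.exp (-(π * (n : ℝ) ^ 2 * t)) - ∫ v in ((n : ℝ) - 1)..(n : ℝ), f v|
        ≤ |Real.exp (-(π * (n : ℝ) ^ 2 * t))| + |∫ v in ((n : ℝ) - 1)..(n : ℝ), f v| :=
          abs_sub _ _
      _ ≤ Real.exp (-c * (n : ℝ) ^ 2) + Real.exp (-c * ((n : ℝ) - 1) ^ 2) := by
          gcongr
          · rw [abs_of_nonneg (Real.exp_nonneg _)]
            apply le_of_eq; congr 1; rw [hc_def]; ring
          · exact hIf_le n
  -- summability of the constant terms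
  have hCsumm : Summable (fun n : ℕ+ ↦ Real.exp (-(π * (n : ℝ) ^ 2 * t))) := by
    refine (summable_psi_term ht).congr fun n ↦ ?_
    congr 1; ring
  have hCtsum : (∑' n : ℕ+, Real.exp (-(π * (n : ℝ) ^ 2 * t))) = psi t := by
    rw [psi]; exact tsum_congr fun n ↦ by congr 1; ring
  -- integrability of f on Ioi 0
  have hfi : IntegrableOn f (Set.Ioi (0 : ℝ)) := by
    have : Integrable (fun v : ℝ ↦ Real.exp (-c * v ^ 2)) := integrable_exp_neg_mul_sq hc
    exact ((this.congr (Filter.Eventually.of_forall fun v ↦ (hf_eq v).symm))).integrableOn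
  -- HasSum of interval integrals to the Ioi integral, over ℕ
  have hHasNat : HasSum (fun n : ℕ ↦ ∫ v in (n : ℝ)..((n : ℝ) + 1), f v)
      (∫ v in Set.Ioi (0 : ℝ), f v) := by
    rw [hasSum_iff_tendsto_nat_of_nonneg (fun n ↦
      intervalIntegral.integral_nonneg (by linarith) (fun x _ ↦ hf_nonneg x))]
    have hps : ∀ N : ℕ, (∑ n ∈ Finset.range N, ∫ v in (n : ℝ)..((n : ℝ) + 1), f v)
        = ∫ v in (0 : ℝ)..(N : ℝ), f v := by
      intro N
      have := intervalIntegral.sum_integral_adjacent_intervals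
        (a := fun n : ℕ ↦ (n : ℝ)) (n := N) (f := f) (μ := volume)
        (fun k _ ↦ hfc.intervalIntegrable _ _)
      simpa using this
    simp only [hps]
    exact intervalIntegral_tendsto_integral_Ioi 0 hfi tendsto_natCast_atTop_atTop
  -- transport to ℕ+
  have hHasPNat : HasSum (fun n : ℕ+ ↦ ∫ v in ((n : ℝ) - 1)..(n : ℝ), f v)
      (∫ v in Set.Ioi (0 : ℝ), f v) := by
    rw [← Equiv.pnatEquivNat.symm.hasSum_iff]
    refine hHasNat.congr_fun fun n ↦ ?_
    simp only [Function.comp, Equiv.pnatEquivNat_symm_apply, pnat_cast_succPNat,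
      add_sub_cancel_right]
  -- the gaussian integral value
  have hGauss : (∫ v in Set.Ioi (0 : ℝ), f v) = (1 / 2) * Real.exp (u / 2) := by
    have : (∫ v in Set.Ioi (0 : ℝ), f v) = ∫ v in Set.Ioi (0 : ℝ), Real.exp (-c * v ^ 2) :=
      setIntegral_congr_fun measurableSet_Ioi (fun v _ ↦ hf_eq v)
    rw [this, integral_gaussian_Ioi]
    have h1 : π / c = Real.exp u := by
      rw [hc_def, ht_def, Real.exp_neg]
      field_simp
    rw [h1]
    have h2 : Real.exp u = Real.exp (u / 2) ^ 2 := by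
      rw [← Real.exp_nat_mul]; congr 1; push_cast; ring
    rw [h2, Real.sqrt_sq (Real.exp_nonneg _)]
    ring
  -- functional equation
  have hFE : psi t = (Real.exp (u / 2) * (1 + 2 * psi (Real.exp u)) - 1) / 2 := by
    have key := Real.tsum_exp_neg_mul_int_sq ht
    rw [tsum_int_gauss ht] at key
    have harg : (∑' n : ℤ, Real.exp (-π / t * (n : ℝ) ^ 2))
        = ∑' n : ℤ, Real.exp (-π * Real.exp u * (n : ℝ) ^ 2) := by
      refine tsum_congr fun n ↦ ?_
      congr 2
      rw [ht_def, Real.exp_neg]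
      field_simp
    rw [harg, tsum_int_gauss (Real.exp_pos u)] at key
    have hrpow : (1 : ℝ) / t ^ ((1 : ℝ) / 2) = Real.exp (u / 2) := by
      rw [ht_def, Real.rpow_def_of_pos (Real.exp_pos _), Real.log_exp, one_div,
        ← Real.exp_neg]
      congr 1
      ring
    rw [hrpow] at key
    linarith
  -- assemble
  refine ⟨hsumm, ?_⟩
  have htsum : (∑' n : ℕ+, ∫ v in ((n : ℝ) - 1)..(n : ℝ),
      (Real.exp (-(π * (n : ℝ) ^ 2 * t)) - f v))
      = psi t - (1 / 2) * Real.exp (u / 2) := by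
    rw [tsum_congr hInt,
      Summable.tsum_sub hCsumm hHasPNat.summable, hCtsum, hHasPNat.tsum_eq, hGauss]
  rw [htsum, bigPsi, hFE]
  have e1 : Real.exp (-u / 4) * Real.exp (u / 2) = Real.exp (u / 4) := by
    rw [← Real.exp_add]; congr 1; ring
  linear_combination (-psi (Real.exp u)) * e1
end

section
/- For every integer n ≥ 1 and every real x, the finite sum ∑_{k=0}^{⌊x−1⌋} ∫₀^∞ ((−λ)^k / k!) · J_n(λ) dλ is nonnegative (the empty sum, occurring when x < 1, being 0). -/
/-!
Exchanging the finite sum with the integral, the integrand becomes the truncated exponential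
series `∑_{k<m} (-λ)^k / k!` times `J_n(λ)`. Since `J_n ≥ 0` vanishes off `[0, 1]`, and on `[0, 1]`
that truncation is the partial sum of an alternating series with nonincreasing terms, hence
nonnegative, the integrand is pointwise nonnegative.
-/

open MeasureTheory

/-- J_n(λ) = n·(√λ − (n−1)/n) for ((n−1)/n)² ≤ λ ≤ 1, and 0 otherwise. -/
noncomputable def Jfun (n : ℕ) (l : ℝ) : ℝ :=
  if (((n : ℝ) - 1) / n) ^ 2 ≤ l ∧ l ≤ 1 then
    (n : ℝ) * (Real.sqrt l - ((n : ℝ) - 1) / n)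
  else 0

theorem alternating_sum_range_mem_Icc {R : Type*} [Ring R] [LinearOrder R] [IsOrderedRing R]
    {f : ℕ → R} (hf : Antitone f) (hf0 : ∀ i, 0 ≤ f i) (m : ℕ) :
    0 ≤ ∑ i ∈ Finset.range m, (-1) ^ i * f i ∧ ∑ i ∈ Finset.range m, (-1) ^ i * f i ≤ f 0 := by
  induction m generalizing f with
  | zero => simpa using hf0 0
  | succ m ih =>
    obtain ⟨hlo, hhi⟩ := ih (f := fun i ↦ f (i + 1)) (fun _ _ h ↦ hf (by omega)) (fun _ ↦ hf0 _)
    have hshift : ∑ i ∈ Finset.range (m + 1), (-1) ^ i * f i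
        = f 0 - ∑ i ∈ Finset.range m, (-1) ^ i * f (i + 1) := by
      simp only [Finset.sum_range_succ', pow_succ, mul_neg_one, neg_mul, Finset.sum_neg_distrib,
        pow_zero, one_mul]
      abel
    rw [hshift]
    exact ⟨sub_nonneg.2 (hhi.trans (hf (Nat.zero_le 1))), sub_le_self _ hlo⟩

theorem antitone_pow_div_factorial {t : ℝ} (ht0 : 0 ≤ t) (ht1 : t ≤ 1) :
    Antitone fun k : ℕ ↦ t ^ k / k.factorial :=
  antitone_nat_of_succ_le fun k ↦
    div_le_div₀ (by positivity) (pow_le_pow_of_le_one ht0 ht1 k.le_succ)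
      (by exact_mod_cast k.factorial_pos) (by exact_mod_cast Nat.factorial_le k.le_succ)

theorem sum_range_neg_pow_div_factorial_nonneg {t : ℝ} (ht0 : 0 ≤ t) (ht1 : t ≤ 1) (m : ℕ) :
    0 ≤ ∑ k ∈ Finset.range m, (-t) ^ k / k.factorial := by
  simp only [neg_pow t, mul_div_assoc]
  exact (alternating_sum_range_mem_Icc (antitone_pow_div_factorial ht0 ht1)
    (fun _ ↦ by positivity) m).1

theorem sub_one_div_natCast_nonneg (n : ℕ) : 0 ≤ ((n : ℝ) - 1) / n := by
  rcases Nat.eq_zero_or_pos n with rfl | hn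
  · simp
  · exact div_nonneg (sub_nonneg.2 (by exact_mod_cast hn)) n.cast_nonneg

theorem Jfun_eq_zero_of_notMem_Icc (n : ℕ) {l : ℝ} (hl : l ∉ Set.Icc 0 1) : Jfun n l = 0 :=
  if_neg fun h ↦ hl ⟨(sq_nonneg _).trans h.1, h.2⟩

theorem Jfun_nonneg (n : ℕ) (l : ℝ) : 0 ≤ Jfun n l := by
  unfold Jfun
  split_ifs with h
  · exact mul_nonneg n.cast_nonneg (sub_nonneg.2 (Real.le_sqrt_of_sq_le h.1))
  · rfl

theorem Jfun_le (n : ℕ) (l : ℝ) : Jfun n l ≤ n := by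
  unfold Jfun
  split_ifs with h
  · have hsqrt : Real.sqrt l ≤ 1 := Real.sqrt_le_one.2 h.2
    have := sub_one_div_natCast_nonneg n
    exact mul_le_of_le_one_right n.cast_nonneg (by linarith)
  · exact n.cast_nonneg

theorem measurable_Jfun (n : ℕ) : Measurable (Jfun n) :=
  Measurable.ite measurableSet_Icc (by fun_prop) measurable_const

theorem integrableOn_mul_Jfun (n : ℕ) {g : ℝ → ℝ} (hg : Continuous g) :
    IntegrableOn (fun l ↦ g l * Jfun n l) (Set.Ioi 0) := by
  have hIcc : IntegrableOn (fun l ↦ g l * Jfun n l) (Set.Icc 0 1) :=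
    hg.integrableOn_Icc.mul_bdd (measurable_Jfun n).aestronglyMeasurable
      (c := n) (ae_of_all _ fun l ↦ by
        rw [Real.norm_of_nonneg (Jfun_nonneg n l)]; exact Jfun_le n l)
  exact hIcc.of_forall_sdiff_eq_zero measurableSet_Ioi fun l hl ↦ by
    rw [Jfun_eq_zero_of_notMem_Icc n hl.2, mul_zero]

theorem sum_integral_nonneg_general (n : ℕ) (x : ℝ) :
    0 ≤ ∑ k ∈ Finset.range (Int.toNat (⌊x - 1⌋ + 1)),
        ∫ l in Set.Ioi (0 : ℝ), ((-l) ^ k / (Nat.factorial k : ℝ)) * Jfun n l := by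
  rw [← integral_finsetSum _ fun k _ ↦ integrableOn_mul_Jfun n (by fun_prop)]
  refine setIntegral_nonneg measurableSet_Ioi fun l _ ↦ ?_
  rw [← Finset.sum_mul]
  by_cases hl : l ∈ Set.Icc 0 1
  · exact mul_nonneg (sum_range_neg_pow_div_factorial_nonneg hl.1 hl.2 _) (Jfun_nonneg n l)
  · rw [Jfun_eq_zero_of_notMem_Icc n hl, mul_zero]

theorem sum_integral_nonneg (n : ℕ) (hn : 1 ≤ n) (x : ℝ) :
    0 ≤ ∑ k ∈ Finset.range (Int.toNat (⌊x - 1⌋ + 1)),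
        ∫ l in Set.Ioi (0 : ℝ), ((-l) ^ k / (Nat.factorial k : ℝ)) * Jfun n l :=
  sum_integral_nonneg_general n x
end
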